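/- Let λ be a limit ordinal, let K be a compact Hausdorff space that is sequentially compact, let φ : K → [0,λ] be a continuous surjection, where [0,λ] is the set of ordinals at most λ with the order topology, and let X be a real Banach space. For each ordinal μ < λ, let P_μ : C(K,X) → C(K,X) be the continuous linear projection P_μ(f) = f·χ_{φ⁻¹([0,μ])} (the pointwise product of f with the indicator function of the clopen set φ⁻¹([0,μ])). Let M be a closed infinite-dimensional subspace of { g ∘ φ : g ∈ C([0,λ],X), g(λ) = 0 } such that, for every μ < λ, the restriction of P_μ to M is strictly singular, i.e., there is no infinite-dimensional closed subspace of M on which P_μ is bounded below. Then M contains an infinite-dimensional closed subspace that is isomorphic to c₀ and complemented in C(K,X). -/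

import Mathlib

/-!
Gliding hump. Since `P_μ` is not bounded below on `M` and the elements of `M` vanish at `λ`, one
can choose `ν₀ < ν₁ < ⋯ < λ` and unit vectors `Fₙ ∈ M` lying within `2⁻ⁿ/8` of the disjointly
supported blocks `Hₙ = P_{νₙ₊₁} Fₙ - P_{νₙ} Fₙ`. A point `kₙ` with `‖Fₙ(kₙ)‖ = 1` lies in the
support of `Hₙ`; along a subsequence `k_{σ n} → k∞`, and the functionals
`f ↦ xₙ*(f(k_{σ n}) - f(k∞))` are biorthogonal to `(H_{σ n})`, uniformly bounded and pointwise
null, so they define `Θ : C(K, X) → c₀`. For `T a = ∑ aₙ F_{σ n}`, the operator `Θ ∘ T` is a small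
perturbation of the identity of `c₀`, hence invertible, and `T (Θ T)⁻¹ Θ` is a projection onto
`T(c₀) ⊆ M`.
-/

/-- The subspace `{ g ∘ φ : g ∈ C([0,l], X), g(l) = 0 }` of `C(K, X)`. -/
def compSubmodule0 {K : Type*} [TopologicalSpace K] {l : Ordinal}
    (X : Type*) [NormedAddCommGroup X] [NormedSpace ℝ X] (φ : C(K, Set.Iic l)) :
    Submodule ℝ C(K, X) where
  carrier := { f | ∃ g : C(Set.Iic l, X), f = g.comp φ ∧ g ⟨l, Set.mem_Iic.mpr le_rfl⟩ = 0 }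
  add_mem' := by
    rintro f₁ f₂ ⟨g₁, rfl, h₁⟩ ⟨g₂, rfl, h₂⟩
    exact ⟨g₁ + g₂, by ext k; simp, by simp [h₁, h₂]⟩
  zero_mem' := ⟨0, by ext k; simp, rfl⟩
  smul_mem' := by
    rintro c f ⟨g, rfl, h⟩
    exact ⟨c • g, by ext k; simp, by simp [h]⟩

open scoped Classical in
/-- Multiplication by the characteristic function of a clopen set, as a map on `C(K, X)`. -/
noncomputable def restrictClopen {K : Type*} [TopologicalSpace K]
    {X : Type*} [NormedAddCommGroup X]
    (U : Set K) (hU : IsClopen U) (f : C(K, X)) : C(K, X) :=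
  ⟨U.piecewise f 0, f.continuous.piecewise
    (fun a ha => by rw [hU.frontier_eq] at ha; exact absurd ha (Set.notMem_empty a))
    continuous_const⟩

/-- `{x ∈ [0,l] : x ≤ μ}` is clopen in `[0,l]`. -/
theorem isClopen_Iic_in_Iic (l μ : Ordinal) :
    IsClopen {x : Set.Iic l | (x : Ordinal) ≤ μ} := by
  constructor
  · exact isClosed_Iic.preimage continuous_subtype_val
  · have : {x : Set.Iic l | (x : Ordinal) ≤ μ} = Subtype.val ⁻¹' Set.Iio (Order.succ μ) := by
      ext x; simp [Order.lt_succ_iff]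
    rw [this]
    exact isOpen_Iio.preimage continuous_subtype_val

/-- The projection `P_μ : C(K,X) → C(K,X)`, `P_μ(f) = f · χ_{φ⁻¹([0,μ])}`. -/
noncomputable def Pmu {K : Type*} [TopologicalSpace K] {l : Ordinal}
    {X : Type*} [NormedAddCommGroup X] (φ : C(K, Set.Iic l)) (μ : Ordinal)
    (f : C(K, X)) : C(K, X) :=
  restrictClopen {k | ((φ k : Ordinal)) ≤ μ}
    ((isClopen_Iic_in_Iic l μ).preimage φ.continuous) f

open Filter Topology
open scoped ZeroAtInfty

namespace ZeroAtInftyContinuousMap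

variable {α β : Type*} [TopologicalSpace α] [SeminormedAddCommGroup β]

theorem norm_apply_le (f : C₀(α, β)) (x : α) : ‖f x‖ ≤ ‖f‖ := by
  rw [← norm_toBCF_eq_norm]
  exact BoundedContinuousFunction.norm_coe_le_norm f.toBCF x

theorem norm_le {f : C₀(α, β)} {C : ℝ} (hC : 0 ≤ C) : ‖f‖ ≤ C ↔ ∀ x, ‖f x‖ ≤ C := by
  rw [← norm_toBCF_eq_norm]
  exact BoundedContinuousFunction.norm_le hC

theorem tendsto_atTop (f : C₀(ℕ, β)) : Tendsto f atTop (𝓝 0) := by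
  simpa [cocompact_eq_atTop] using f.zero_at_infty'

def ofTendstoAtTop (a : ℕ → β) (ha : Tendsto a atTop (𝓝 0)) : C₀(ℕ, β) :=
  ⟨⟨a, continuous_of_discreteTopology⟩, by rwa [cocompact_eq_atTop]⟩

@[simp]
theorem ofTendstoAtTop_apply (a : ℕ → β) (ha : Tendsto a atTop (𝓝 0)) (n : ℕ) :
    ofTendstoAtTop a ha n = a n :=
  rfl

end ZeroAtInftyContinuousMap

open ZeroAtInftyContinuousMap

theorem not_finiteDimensional_c0 : ¬ FiniteDimensional ℝ C₀(ℕ, ℝ) := by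
  intro _
  let coeFn : C₀(ℕ, ℝ) →ₗ[ℝ] ℕ → ℝ :=
    { toFun := (⇑), map_add' := fun _ _ => rfl, map_smul' := fun _ _ => rfl }
  let e : ℕ → C₀(ℕ, ℝ) := fun m => ofTendstoAtTop (Pi.single m 1)
    (tendsto_const_nhds.congr' (eventually_gt_atTop m |>.mono fun n hn =>
      (Pi.single_eq_of_ne (M := fun _ => ℝ) hn.ne' 1).symm))
  exact Module.Finite.not_linearIndependent_of_infinite e
    (LinearIndependent.of_comp coeFn (Pi.linearIndependent_single_one ℕ ℝ))

section SequenceOperators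

variable {E : Type*} [NormedAddCommGroup E] [NormedSpace ℝ E]

def HasC0UpperEstimate (h : ℕ → E) (C : ℝ) : Prop :=
  ∀ (t : Finset ℕ) (c : ℕ → ℝ) (b : ℝ), 0 ≤ b → (∀ n ∈ t, ‖c n‖ ≤ b) →
    ‖∑ n ∈ t, c n • h n‖ ≤ C * b

namespace HasC0UpperEstimate

variable {h : ℕ → E} {C : ℝ}

theorem nonneg (hh : HasC0UpperEstimate h C) : 0 ≤ C := by
  simpa using hh ∅ 0 1 zero_le_one (by simp)

theorem of_norm_le {δ : ℕ → ℝ} (hδ : ∀ n, ‖h n‖ ≤ δ n) (hδs : Summable δ) :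
    HasC0UpperEstimate h (∑' n, δ n) := by
  intro t c b hb hc
  calc ‖∑ n ∈ t, c n • h n‖ ≤ ∑ n ∈ t, b * δ n := by
        refine (norm_sum_le _ _).trans (Finset.sum_le_sum fun n hn => ?_)
        rw [norm_smul]
        exact mul_le_mul (hc n hn) (hδ n) (norm_nonneg _) hb
    _ = b * ∑ n ∈ t, δ n := (Finset.mul_sum ..).symm
    _ ≤ b * ∑' n, δ n :=
        mul_le_mul_of_nonneg_left (hδs.sum_le_tsum t fun n _ => (norm_nonneg _).trans (hδ n)) hb
    _ = (∑' n, δ n) * b := mul_comm ..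

theorem summable_smul [CompleteSpace E] (hh : HasC0UpperEstimate h C) (a : C₀(ℕ, ℝ)) :
    Summable fun n => a n • h n := by
  refine summable_iff_vanishing_norm.mpr fun ε hε => ?_
  have hC := hh.nonneg
  have hη : 0 < ε / (C + 1) := by positivity
  obtain ⟨N, hN⟩ := (Metric.tendsto_atTop.mp a.tendsto_atTop) _ hη
  refine ⟨Finset.range N, fun t ht => ?_⟩
  have hsmall : ∀ n ∈ t, ‖a n‖ ≤ ε / (C + 1) := fun n hn => by
    have hNn : N ≤ n := by simpa using Finset.disjoint_left.mp ht hn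
    simpa using (hN n hNn).le
  calc ‖∑ n ∈ t, a n • h n‖ ≤ C * (ε / (C + 1)) := hh t a _ hη.le hsmall
    _ < ε := by rw [mul_div_assoc', div_lt_iff₀ (by positivity)]; linarith

theorem norm_tsum_le [CompleteSpace E] (hh : HasC0UpperEstimate h C) (a : C₀(ℕ, ℝ)) :
    ‖∑' n, a n • h n‖ ≤ C * ‖a‖ :=
  le_of_tendsto' (hh.summable_smul a).hasSum.tendsto_sum_nat.norm fun _ =>
    hh _ a _ (norm_nonneg a) fun n _ => a.norm_apply_le n

noncomputable def sumCLM [CompleteSpace E] (hh : HasC0UpperEstimate h C) : C₀(ℕ, ℝ) →L[ℝ] E :=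
  LinearMap.mkContinuous
    { toFun := fun a => ∑' n, a n • h n
      map_add' := fun a b => by
        simp only [ZeroAtInftyContinuousMap.add_apply, add_smul]
        exact (hh.summable_smul a).tsum_add (hh.summable_smul b)
      map_smul' := fun c a => by
        simp only [ZeroAtInftyContinuousMap.smul_apply, smul_eq_mul, ← smul_smul, RingHom.id_apply]
        exact (hh.summable_smul a).tsum_const_smul c }
    C hh.norm_tsum_le

theorem hasSum_sumCLM [CompleteSpace E] (hh : HasC0UpperEstimate h C) (a : C₀(ℕ, ℝ)) :
    HasSum (fun n => a n • h n) (hh.sumCLM a) :=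
  (hh.summable_smul a).hasSum

theorem norm_sumCLM_le [CompleteSpace E] (hh : HasC0UpperEstimate h C) : ‖hh.sumCLM‖ ≤ C :=
  LinearMap.mkContinuous_norm_le _ hh.nonneg _

end HasC0UpperEstimate

noncomputable def coordCLM (Φ : ℕ → StrongDual ℝ E) {C : ℝ} (hΦ : ∀ n, ‖Φ n‖ ≤ C)
    (hnull : ∀ x, Tendsto (fun n => Φ n x) atTop (𝓝 0)) : E →L[ℝ] C₀(ℕ, ℝ) :=
  LinearMap.mkContinuous
    { toFun := fun x => ofTendstoAtTop (fun n => Φ n x) (hnull x)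
      map_add' := fun x y => by ext n; simp
      map_smul' := fun c x => by ext n; simp }
    C fun x => (norm_le (mul_nonneg ((norm_nonneg _).trans (hΦ 0)) (norm_nonneg x))).mpr
      fun n => ((Φ n).le_opNorm x).trans (mul_le_mul_of_nonneg_right (hΦ n) (norm_nonneg x))

@[simp]
theorem coordCLM_apply (Φ : ℕ → StrongDual ℝ E) {C : ℝ} (hΦ : ∀ n, ‖Φ n‖ ≤ C)
    (hnull : ∀ x, Tendsto (fun n => Φ n x) atTop (𝓝 0)) (x : E) (n : ℕ) :
    coordCLM Φ hΦ hnull x n = Φ n x :=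
  rfl

theorem norm_coordCLM_le (Φ : ℕ → StrongDual ℝ E) {C : ℝ} (hΦ : ∀ n, ‖Φ n‖ ≤ C)
    (hnull : ∀ x, Tendsto (fun n => Φ n x) atTop (𝓝 0)) : ‖coordCLM Φ hΦ hnull‖ ≤ C :=
  LinearMap.mkContinuous_norm_le _ ((norm_nonneg _).trans (hΦ 0)) _

theorem exists_leftInverse_of_perturbation [CompleteSpace E] {h f : ℕ → E} {B C : ℝ}
    {Φ : ℕ → StrongDual ℝ E} {δ : ℕ → ℝ} (hh : HasC0UpperEstimate h B) (hΦ : ∀ n, ‖Φ n‖ ≤ C)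
    (hnull : ∀ x, Tendsto (fun n => Φ n x) atTop (𝓝 0))
    (hΦh : ∀ n m, Φ n (h m) = if n = m then 1 else 0)
    (hfh : ∀ n, ‖f n - h n‖ ≤ δ n) (hδ : Summable δ) (hsmall : C * ∑' n, δ n < 1) :
    ∃ T : C₀(ℕ, ℝ) →L[ℝ] E, (∀ a, HasSum (fun n => a n • f n) (T a)) ∧
      ∃ L : E →L[ℝ] C₀(ℕ, ℝ), ∀ a, L (T a) = a := by
  have hd := HasC0UpperEstimate.of_norm_le hfh hδ
  set Θ := coordCLM Φ hΦ hnull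
  have hΘh : Θ ∘L hh.sumCLM = 1 := by
    ext a n
    have := ((hh.hasSum_sumCLM a).mapL (Φ n)).tsum_eq
    simp only [map_smul, hΦh, smul_eq_mul, mul_ite, mul_one, mul_zero] at this
    simp [Θ, ← this]
  have hΘd : ‖-(Θ ∘L hd.sumCLM)‖ < 1 :=
    calc ‖-(Θ ∘L hd.sumCLM)‖ = ‖Θ ∘L hd.sumCLM‖ := ContinuousLinearMap.opNorm_neg _
      _ ≤ C * ∑' n, δ n :=
          (Θ.opNorm_comp_le _).trans (mul_le_mul (norm_coordCLM_le ..) hd.norm_sumCLM_le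
            (norm_nonneg _) ((norm_nonneg _).trans (hΦ 0)))
      _ < 1 := hsmall
  set u := Units.oneSub (R := C₀(ℕ, ℝ) →L[ℝ] C₀(ℕ, ℝ)) _ hΘd
  have hu : Θ ∘L (hh.sumCLM + hd.sumCLM) = u := by
    rw [Units.val_oneSub, ContinuousLinearMap.comp_add, hΘh]
    abel
  refine ⟨hh.sumCLM + hd.sumCLM, fun a => ?_, ↑u⁻¹ ∘L Θ, fun a => ?_⟩
  · simpa only [← smul_add, add_sub_cancel, _root_.add_apply] using
      (hh.hasSum_sumCLM a).add (hd.hasSum_sumCLM a)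
  · change (↑u⁻¹ : C₀(ℕ, ℝ) →L[ℝ] C₀(ℕ, ℝ)) ((Θ ∘L (hh.sumCLM + hd.sumCLM)) a) = a
    rw [hu]
    exact DFunLike.congr_fun u.inv_mul a

end SequenceOperators

section LeftInverse

variable {R E F : Type*} [Ring R] [TopologicalSpace E] [AddCommGroup E] [Module R E]
  [TopologicalSpace F] [AddCommGroup F] [Module R F]

theorem closedComplemented_range_of_leftInverse (T : F →L[R] E) (L : E →L[R] F)
    (hLT : ∀ a, L (T a) = a) : (LinearMap.range (T : F →ₗ[R] E)).ClosedComplemented :=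
  ⟨T.codRestrict _ (LinearMap.mem_range_self (T : F →ₗ[R] E)) ∘L L, by
    rintro ⟨_, a, rfl⟩
    ext
    simp [hLT]⟩

noncomputable def rangeEquivOfLeftInverse (T : F →L[R] E) (L : E →L[R] F)
    (hLT : ∀ a, L (T a) = a) : LinearMap.range (T : F →ₗ[R] E) ≃L[R] F :=
  ContinuousLinearEquiv.equivOfInverse (L ∘L (LinearMap.range (T : F →ₗ[R] E)).subtypeL)
    (T.codRestrict _ (LinearMap.mem_range_self (T : F →ₗ[R] E)))
    (by rintro ⟨_, a, rfl⟩; ext; simp [hLT]) hLT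

end LeftInverse

namespace ContinuousMap

variable {K X : Type*} [TopologicalSpace K] [CompactSpace K] [NormedAddCommGroup X]

theorem exists_norm_apply_eq_norm [Nonempty K] (f : C(K, X)) : ∃ k, ‖f k‖ = ‖f‖ := by
  obtain ⟨k, -, hk⟩ := isCompact_univ.exists_isMaxOn Set.univ_nonempty
    (continuous_norm.comp f.continuous).continuousOn
  exact ⟨k, le_antisymm (f.norm_coe_le_norm k)
    ((norm_le _ (norm_nonneg _)).mpr fun x => hk (Set.mem_univ x))⟩

variable [NormedSpace ℝ X]

theorem hasC0UpperEstimate_of_disjoint {h : ℕ → C(K, X)} (hnorm : ∀ n, ‖h n‖ ≤ 1)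
    (hdisj : ∀ x m n, h m x ≠ 0 → h n x ≠ 0 → m = n) : HasC0UpperEstimate h 1 := by
  intro t c b hb hc
  rw [one_mul, norm_le _ hb]
  intro x
  simp only [coe_sum, coe_smul, Finset.sum_apply, Pi.smul_apply]
  by_cases hx : ∃ n₀ ∈ t, h n₀ x ≠ 0
  · obtain ⟨n₀, hn₀, hx⟩ := hx
    rw [Finset.sum_eq_single_of_mem n₀ hn₀ fun n _ hn => by
      rw [not_ne_iff.mp (mt (hdisj x n n₀ · hx) hn), smul_zero], norm_smul]
    calc ‖c n₀‖ * ‖h n₀ x‖ ≤ b * 1 :=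
          mul_le_mul (hc n₀ hn₀) (((h n₀).norm_coe_le_norm x).trans (hnorm n₀)) (norm_nonneg _) hb
      _ = b := mul_one b
  · push Not at hx
    rw [Finset.sum_eq_zero fun n hn => by rw [hx n hn, smul_zero], norm_zero]
    exact hb

theorem exists_biorthogonal_subseq [SeqCompactSpace K] {h : ℕ → C(K, X)} {k : ℕ → K}
    (hdiag : ∀ n, ‖h n (k n)‖ = 1) (hoff : ∀ m n, m ≠ n → h m (k n) = 0) :
    ∃ σ : ℕ → ℕ, StrictMono σ ∧ ∃ Φ : ℕ → StrongDual ℝ C(K, X), (∀ n, ‖Φ n‖ ≤ 2) ∧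
      (∀ f, Tendsto (fun n => Φ n f) atTop (𝓝 0)) ∧
      ∀ n m, Φ n (h (σ m)) = if n = m then 1 else 0 := by
  obtain ⟨k₀, σ, hσ, hk⟩ := SeqCompactSpace.tendsto_subseq k
  -- `h m` vanishes at `k (σ n)` as soon as `σ n ≠ m`, hence at the limit point `k₀`
  have hk₀ : ∀ m, h m k₀ = 0 := fun m =>
    tendsto_nhds_unique (((h m).continuous.tendsto k₀).comp hk)
      (tendsto_const_nhds.congr' ((eventually_gt_atTop m).mono fun n hn =>
        (hoff m (σ n) (hn.trans_le (hσ.id_le n)).ne).symm))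
  choose x hx1 hx using fun n => exists_dual_vector ℝ (h (σ n) (k (σ n))) (by simp [hdiag])
  refine ⟨σ, hσ, fun n => x n ∘L (evalCLM ℝ (k (σ n)) - evalCLM ℝ k₀), fun n => ?_,
    fun f => ?_, fun n m => ?_⟩
  · refine ContinuousLinearMap.opNorm_le_bound _ zero_le_two fun f => ?_
    calc ‖x n (f (k (σ n)) - f k₀)‖ ≤ ‖x n‖ * ‖f (k (σ n)) - f k₀‖ := (x n).le_opNorm _
      _ ≤ 1 * (‖f‖ + ‖f‖) := by
          rw [hx1]
          gcongr
          exact (norm_sub_le _ _).trans (add_le_add (f.norm_coe_le_norm _) (f.norm_coe_le_norm _))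
      _ = 2 * ‖f‖ := by ring
  · refine squeeze_zero_norm (fun n => ?_)
      (tendsto_iff_norm_sub_tendsto_zero.mp ((f.continuous.tendsto k₀).comp hk))
    calc ‖x n (f (k (σ n)) - f k₀)‖ ≤ ‖x n‖ * ‖f (k (σ n)) - f k₀‖ := (x n).le_opNorm _
      _ = ‖f (k (σ n)) - f k₀‖ := by rw [hx1, one_mul]
  · change x n (h (σ m) (k (σ n)) - h (σ m) k₀) = _
    rw [hk₀, sub_zero]
    split_ifs with hnm
    · simp [hnm, hx, hdiag]
    · rw [hoff _ _ (hσ.injective.ne (Ne.symm hnm)), map_zero]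

end ContinuousMap

section Projections

variable {K : Type*} [TopologicalSpace K] {l : Ordinal} {X : Type*} [NormedAddCommGroup X]
  (φ : C(K, Set.Iic l))

theorem Pmu_apply (μ : Ordinal) (f : C(K, X)) (x : K) :
    Pmu φ μ f x = if (φ x : Ordinal) ≤ μ then f x else 0 := by
  simp only [Pmu, restrictClopen, ContinuousMap.coe_mk]
  split_ifs with h
  · exact Set.piecewise_eq_of_mem _ _ _ h
  · exact Set.piecewise_eq_of_notMem _ _ _ h

theorem Pmu_smul [NormedSpace ℝ X] (μ : Ordinal) (c : ℝ) (f : C(K, X)) :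
    Pmu φ μ (c • f) = c • Pmu φ μ f := by
  ext x
  simp only [Pmu_apply, ContinuousMap.smul_apply]
  split_ifs <;> simp

theorem Pmu_sub_Pmu_apply {μ ν : Ordinal} (hμν : μ ≤ ν) (f : C(K, X)) (x : K) :
    (Pmu φ ν f - Pmu φ μ f) x = if (φ x : Ordinal) ∈ Set.Ioc μ ν then f x else 0 := by
  rcases le_or_gt (φ x : Ordinal) μ with h | h
  · simp [Pmu_apply, h, h.trans hμν, h.not_gt]
  · by_cases h' : (φ x : Ordinal) ≤ ν <;> simp [Pmu_apply, h, h', h.not_ge]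

theorem mem_Ioc_of_Pmu_sub_Pmu_apply_ne_zero {μ ν : Ordinal} (hμν : μ ≤ ν) {f : C(K, X)} {x : K}
    (hx : (Pmu φ ν f - Pmu φ μ f) x ≠ 0) : (φ x : Ordinal) ∈ Set.Ioc μ ν := by
  by_contra h
  exact hx (by rw [Pmu_sub_Pmu_apply φ hμν, if_neg h])

theorem eq_of_Pmu_sub_Pmu_apply_ne_zero {ν : ℕ → Ordinal} (hν : Monotone ν) {f g : C(K, X)}
    {x : K} {m n : ℕ} (hm : (Pmu φ (ν (m + 1)) f - Pmu φ (ν m) f) x ≠ 0)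
    (hn : (Pmu φ (ν (n + 1)) g - Pmu φ (ν n) g) x ≠ 0) : m = n := by
  by_contra hmn
  exact Set.disjoint_left.mp (hν.pairwise_disjoint_on_Ioc_succ hmn)
    (mem_Ioc_of_Pmu_sub_Pmu_apply_ne_zero φ (hν m.le_succ) hm)
    (mem_Ioc_of_Pmu_sub_Pmu_apply_ne_zero φ (hν n.le_succ) hn)

variable [CompactSpace K]

theorem norm_Pmu_sub_Pmu_le {μ ν : Ordinal} (hμν : μ ≤ ν) (f : C(K, X)) :
    ‖Pmu φ ν f - Pmu φ μ f‖ ≤ ‖f‖ :=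
  (ContinuousMap.norm_le _ (norm_nonneg f)).mpr fun x => by
    rw [Pmu_sub_Pmu_apply φ hμν]
    split_ifs
    · exact f.norm_coe_le_norm x
    · simp

theorem exists_norm_apply_eq_one_mem_Ioc {f : C(K, X)} (hf : ‖f‖ = 1) {μ ν : Ordinal}
    (hμ : ‖Pmu φ μ f‖ < 1) (hν : ‖f - Pmu φ ν f‖ < 1) :
    ∃ k, ‖f k‖ = 1 ∧ (φ k : Ordinal) ∈ Set.Ioc μ ν := by
  have : Nonempty K := by
    by_contra hK
    rw [not_nonempty_iff] at hK
    simp [Subsingleton.elim f 0] at hf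
  obtain ⟨k, hk⟩ := f.exists_norm_apply_eq_norm
  rw [hf] at hk
  refine ⟨k, hk, not_le.mp fun h => ?_, not_lt.mp fun h => ?_⟩
  · have := (Pmu φ μ f).norm_coe_le_norm k
    rw [Pmu_apply, if_pos h, hk] at this
    linarith
  · have := (f - Pmu φ ν f).norm_coe_le_norm k
    rw [ContinuousMap.sub_apply, Pmu_apply, if_neg h.not_ge, sub_zero, hk] at this
    linarith

variable [NormedSpace ℝ X]

theorem exists_norm_eq_one_norm_Pmu_le {M : Submodule ℝ C(K, X)} {μ : Ordinal}
    (hμ : ¬ ∃ c > 0, ∀ f ∈ M, c * ‖f‖ ≤ ‖Pmu φ μ f‖) {ε : ℝ} (hε : 0 < ε) :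
    ∃ f ∈ M, ‖f‖ = 1 ∧ ‖Pmu φ μ f‖ ≤ ε := by
  push Not at hμ
  obtain ⟨f, hfM, hf⟩ := hμ ε hε
  have hf0 : 0 < ‖f‖ := pos_of_mul_pos_right ((norm_nonneg _).trans_lt hf) hε.le
  refine ⟨‖f‖⁻¹ • f, M.smul_mem _ hfM, by simp [norm_smul, hf0.ne'], ?_⟩
  rw [Pmu_smul, norm_smul, norm_inv, norm_norm, inv_mul_le_iff₀ hf0]
  linarith

theorem exists_norm_sub_Pmu_le (hl : Order.IsSuccLimit l) {f : C(K, X)}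
    (hf : f ∈ compSubmodule0 X φ) {ε : ℝ} (hε : 0 < ε) {μ : Ordinal} (hμ : μ < l) :
    ∃ ν, μ < ν ∧ ν < l ∧ ‖f - Pmu φ ν f‖ ≤ ε := by
  obtain ⟨g, rfl, hg⟩ := hf
  obtain ⟨ν₁, hν₁, hsub⟩ := exists_Ioc_subset_of_mem_nhds (a := ⟨l, Set.mem_Iic.mpr le_rfl⟩)
    ((isOpen_lt (continuous_norm.comp g.continuous) continuous_const).mem_nhds
      (by simpa [hg] using hε))
    ⟨⟨μ, hμ.le⟩, hμ⟩
  refine ⟨max ν₁ (Order.succ μ), (Order.lt_succ μ).trans_le (le_max_right _ _),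
    max_lt hν₁ (hl.succ_lt hμ), (ContinuousMap.norm_le _ hε.le).mpr fun x => ?_⟩
  rw [ContinuousMap.sub_apply, Pmu_apply]
  split_ifs with hx
  · simpa using hε.le
  · have hx : ν₁ < φ x := Subtype.coe_lt_coe.mp ((le_max_left _ _).trans_lt (not_le.mp hx))
    simpa using (hsub ⟨hx, (φ x).2⟩).le

end Projections

section GlidingHump

variable {K : Type*} [TopologicalSpace K] [CompactSpace K] {l : Ordinal} {X : Type*}
  [NormedAddCommGroup X] [NormedSpace ℝ X] (φ : C(K, Set.Iic l))

theorem exists_glidingHump (hl : Order.IsSuccLimit l) {M : Submodule ℝ C(K, X)}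
    (hMZ : M ≤ compSubmodule0 X φ) (hP : ∀ μ < l, ¬ ∃ c > 0, ∀ f ∈ M, c * ‖f‖ ≤ ‖Pmu φ μ f‖)
    {ε : ℕ → ℝ} (hε : ∀ n, 0 < ε n) :
    ∃ ν : ℕ → Ordinal, StrictMono ν ∧ ∃ F : ℕ → C(K, X), ∀ n, F n ∈ M ∧ ‖F n‖ = 1 ∧
      ‖Pmu φ (ν n) (F n)‖ ≤ ε n ∧ ‖F n - Pmu φ (ν (n + 1)) (F n)‖ ≤ ε n := by
  have step : ∀ (n : ℕ) (μ : Set.Iio l), ∃ f ∈ M, ∃ ν : Set.Iio l, ‖f‖ = 1 ∧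
      ‖Pmu φ μ f‖ ≤ ε n ∧ μ < ν ∧ ‖f - Pmu φ ν f‖ ≤ ε n := fun n ⟨μ, hμ⟩ => by
    obtain ⟨f, hfM, hf1, hfμ⟩ := exists_norm_eq_one_norm_Pmu_le φ (hP μ hμ) (hε n)
    obtain ⟨ν, hμν, hν, hfν⟩ := exists_norm_sub_Pmu_le φ hl (hMZ hfM) (hε n) hμ
    exact ⟨f, hfM, ⟨ν, hν⟩, hf1, hfμ, hμν, hfν⟩
  choose F hFM next hF using step
  let ν : ℕ → Set.Iio l := fun n => Nat.rec ⟨⊥, hl.bot_lt⟩ next n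
  have hν n : ν (n + 1) = next n (ν n) := rfl
  refine ⟨fun n => (ν n).1, strictMono_nat_of_lt_succ fun n => ?_, fun n => F n (ν n),
    fun n => ⟨hFM n (ν n), (hF n (ν n)).1, (hF n (ν n)).2.1, ?_⟩⟩
  · rw [hν]
    exact (hF n (ν n)).2.2.1
  · dsimp only
    rw [hν]
    exact (hF n (ν n)).2.2.2

theorem exists_leftInverse_of_glidingHump [SeqCompactSpace K] [CompleteSpace X] {ν : ℕ → Ordinal}
    (hν : StrictMono ν) {F : ℕ → C(K, X)} (hF : ∀ n, ‖F n‖ = 1)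
    (hFν : ∀ n, ‖Pmu φ (ν n) (F n)‖ ≤ (1 / 2) ^ n / 16)
    (hFν' : ∀ n, ‖F n - Pmu φ (ν (n + 1)) (F n)‖ ≤ (1 / 2) ^ n / 16) :
    ∃ σ : ℕ → ℕ, ∃ T : C₀(ℕ, ℝ) →L[ℝ] C(K, X), (∀ a, HasSum (fun n => a n • F (σ n)) (T a)) ∧
      ∃ L : C(K, X) →L[ℝ] C₀(ℕ, ℝ), ∀ a, L (T a) = a := by
  set H : ℕ → C(K, X) := fun n => Pmu φ (ν (n + 1)) (F n) - Pmu φ (ν n) (F n)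
  have hle n : ν n ≤ ν (n + 1) := hν.monotone n.le_succ
  have hsmall n : (1 / 2 : ℝ) ^ n / 16 < 1 := by
    have := pow_le_one₀ (n := n) (by norm_num : (0 : ℝ) ≤ 1 / 2) (by norm_num)
    linarith
  choose k hk hkν using fun n =>
    exists_norm_apply_eq_one_mem_Ioc φ (hF n) ((hFν n).trans_lt (hsmall n))
      ((hFν' n).trans_lt (hsmall n))
  have hHk n : ‖H n (k n)‖ = 1 := by rw [Pmu_sub_Pmu_apply φ (hle n), if_pos (hkν n), hk]
  obtain ⟨σ, hσ, Φ, hΦ, hnull, hΦH⟩ := ContinuousMap.exists_biorthogonal_subseq hHk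
    fun m n hmn => by
      by_contra h
      have hn : H n (k n) ≠ 0 := norm_ne_zero_iff.mp (by rw [hHk]; exact one_ne_zero)
      exact hmn (eq_of_Pmu_sub_Pmu_apply_ne_zero φ hν.monotone h hn)
  have hFH n : ‖F (σ n) - H (σ n)‖ ≤ (1 / 2) ^ n / 8 :=
    calc ‖F (σ n) - H (σ n)‖
        = ‖Pmu φ (ν (σ n)) (F (σ n)) + (F (σ n) - Pmu φ (ν (σ n + 1)) (F (σ n)))‖ := by
          simp only [H]
          congr 1
          abel
      _ ≤ (1 / 2) ^ σ n / 16 + (1 / 2) ^ σ n / 16 :=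
          (norm_add_le _ _).trans (add_le_add (hFν _) (hFν' _))
      _ ≤ (1 / 2) ^ n / 8 := by
          linarith [pow_le_pow_of_le_one (by norm_num : (0 : ℝ) ≤ 1 / 2) (by norm_num)
            (show n ≤ σ n from hσ.le_apply)]
  refine ⟨σ, exists_leftInverse_of_perturbation
    (ContinuousMap.hasC0UpperEstimate_of_disjoint
      (fun n => (norm_Pmu_sub_Pmu_le φ (hle (σ n)) _).trans (hF (σ n)).le)
      fun x m n hm hn => hσ.injective (eq_of_Pmu_sub_Pmu_apply_ne_zero φ hν.monotone hm hn))
    hΦ hnull hΦH hFH (summable_geometric_two.div_const 8) ?_⟩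
  rw [tsum_div_const, tsum_geometric_two]
  norm_num

end GlidingHump

theorem c0_subspace_of_strictly_singular_projections_general
    (l : Ordinal) (hl : Order.IsSuccLimit l)
    (K : Type*) [TopologicalSpace K] [CompactSpace K] [SeqCompactSpace K]
    (φ : C(K, Set.Iic l))
    (X : Type*) [NormedAddCommGroup X] [NormedSpace ℝ X] [CompleteSpace X]
    (M : Submodule ℝ C(K, X)) (hMclosed : IsClosed (M : Set C(K, X)))
    (hMinf : ¬ FiniteDimensional ℝ M) (hMZ : M ≤ compSubmodule0 X φ)
    (hss : ∀ μ < l, ¬ ∃ N : Submodule ℝ C(K, X), N ≤ M ∧ IsClosed (N : Set C(K, X)) ∧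
      ¬ FiniteDimensional ℝ N ∧ ∃ c > 0, ∀ f ∈ N, c * ‖f‖ ≤ ‖Pmu φ μ f‖) :
    ∃ N : Submodule ℝ C(K, X), N ≤ M ∧ IsClosed (N : Set C(K, X)) ∧
      ¬ FiniteDimensional ℝ N ∧
      Nonempty (N ≃L[ℝ] ZeroAtInftyContinuousMap ℕ ℝ) ∧
      N.ClosedComplemented := by
  obtain ⟨ν, hν, F, hF⟩ := exists_glidingHump φ hl hMZ
    (fun μ hμ ⟨c, hc, h⟩ => hss μ hμ ⟨M, le_rfl, hMclosed, hMinf, c, hc, h⟩)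
    (ε := fun n => (1 / 2) ^ n / 16) fun n => by positivity
  obtain ⟨σ, T, hT, L, hLT⟩ := exists_leftInverse_of_glidingHump φ hν (fun n => (hF n).2.1)
    (fun n => (hF n).2.2.1) fun n => (hF n).2.2.2
  have hcompl := closedComplemented_range_of_leftInverse T L hLT
  refine ⟨_, ?_, hcompl.isClosed, fun _ => not_finiteDimensional_c0
    (rangeEquivOfLeftInverse T L hLT).toLinearEquiv.finiteDimensional,
    ⟨rangeEquivOfLeftInverse T L hLT⟩, hcompl⟩
  rintro _ ⟨a, rfl⟩
  exact hMclosed.mem_of_tendsto (hT a).tendsto_sum_nat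
    (Eventually.of_forall fun _ => M.sum_mem fun n _ => M.smul_mem _ (hF (σ n)).1)

theorem c0_subspace_of_strictly_singular_projections
    (l : Ordinal) (hl : Order.IsSuccLimit l)
    (K : Type*) [TopologicalSpace K] [CompactSpace K] [T2Space K] [SeqCompactSpace K]
    (φ : C(K, Set.Iic l)) (hφ : Function.Surjective φ)
    (X : Type*) [NormedAddCommGroup X] [NormedSpace ℝ X] [CompleteSpace X]
    (M : Submodule ℝ C(K, X)) (hMclosed : IsClosed (M : Set C(K, X)))
    (hMinf : ¬ FiniteDimensional ℝ M) (hMZ : M ≤ compSubmodule0 X φ)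
    (hss : ∀ μ < l, ¬ ∃ N : Submodule ℝ C(K, X), N ≤ M ∧ IsClosed (N : Set C(K, X)) ∧
      ¬ FiniteDimensional ℝ N ∧ ∃ c > 0, ∀ f ∈ N, c * ‖f‖ ≤ ‖Pmu φ μ f‖) :
    ∃ N : Submodule ℝ C(K, X), N ≤ M ∧ IsClosed (N : Set C(K, X)) ∧
      ¬ FiniteDimensional ℝ N ∧
      Nonempty (N ≃L[ℝ] ZeroAtInftyContinuousMap ℕ ℝ) ∧
      N.ClosedComplemented :=
  c0_subspace_of_strictly_singular_projections_general l hl K φ X M hMclosed hMinf hMZ hss
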